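/- arXiv:1308.3816 — 5 statements merged into one kernel-verified Lean document; each statement's English description precedes it below -/
import Mathlib

section
/- Let A = k⟨X⟩/I be a finitely presented algebra, fix a monomial order on the free monoid X*, let 𝒢 be a Gröbner basis of I, let 𝒢_m = {g ∈ 𝒢 : deg g ≤ m}, and set A' = k⟨X⟩/(LM(𝒢_m)), the monomial algebra on the leading monomials of 𝒢_m. Then dim_k A'_i ≥ dim_k A_i for all i ≥ 0, with equality for all i ≤ m. Equivalently, H_{A'}(t) − H_A(t) = Σ_{i>m} a_i t^i with all a_i ≥ 0. -/
open MonoidAlgebra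
open scoped Classical

variable {k : Type*} [Field k] {X : Type*} [Fintype X] [LinearOrder (FreeMonoid X)]

/-- The leading monomial of a noncommutative polynomial with respect to a
monomial (admissible) order on the free monoid X*. -/
noncomputable def leadMon (f : MonoidAlgebra k (FreeMonoid X)) : FreeMonoid X :=
  if h : f = 0 then 1 else f.coeff.support.max'
    (Finsupp.support_nonempty_iff.mpr fun h' => h (MonoidAlgebra.coeff_eq_zero.mp h'))

/-- The degree-i homogeneous component of the free algebra k⟨X⟩:
the span of the words of length i. -/
noncomputable def wordSpanX (k : Type*) [Field k] (X : Type*) (i : ℕ) :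
    Submodule k (MonoidAlgebra k (FreeMonoid X)) :=
  Submodule.span k
    {f | ∃ w : FreeMonoid X, w.length = i ∧ f = MonoidAlgebra.single w (1 : k)}

/-!
Both Hilbert functions count words. If 𝒢 is a Gröbner basis of the homogeneous ideal `I`, then
`dim I_i` is the number of words of length `i` having some `LM(g)`, `g ∈ 𝒢`, as a factor:
restricting coefficients to these words is injective on `I_i`, because the leading word of a
nonzero element of `I` is such a word; conversely `u·LM(g)·v` is the leading word of the degree-`i`
component of `u g v ∈ I`, and elements with distinct leading words are linearly independent.
The monomial ideal `(LM(𝒢_m))` is spanned by the words with a factor in `LM(𝒢_m)`, a subset of the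
former words, so `A'` has at least as many normal words as `A` in each degree. In degree `i ≤ m` the
two sets of words agree, since `LM(g)` can be a factor of a word of length `i` only if
`deg g = |LM(g)| ≤ i`.
-/

open Module

namespace MonoidAlgebra

section LeadingMonomial

variable {M : Type*}

def IsLeadingMonomial [LE M] (f : MonoidAlgebra k M) (w : M) : Prop :=
  f.coeff w ≠ 0 ∧ ∀ v ∈ f.coeff.support, v ≤ w

theorem IsLeadingMonomial.filter [LE M] {f : MonoidAlgebra k M} {w : M}
    (hf : IsLeadingMonomial f w) {p : M → Prop} [DecidablePred p] (hp : p w) :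
    IsLeadingMonomial (ofCoeff (f.coeff.filter p)) w := by
  refine ⟨by rw [coeff_ofCoeff, Finsupp.filter_apply_pos p _ hp]; exact hf.1,
    fun v hv => hf.2 v ?_⟩
  rw [coeff_ofCoeff, Finsupp.support_filter] at hv
  exact Finset.mem_of_mem_filter v hv

theorem IsLeadingMonomial.single_mul_mul_single [Monoid M] [IsCancelMul M] [Preorder M]
    [MulLeftMono M] [MulRightMono M] {f : MonoidAlgebra k M} {w : M}
    (hf : IsLeadingMonomial f w) (u v : M) :
    IsLeadingMonomial (single u 1 * f * single v 1) (u * w * v) := by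
  refine ⟨by rw [coeff_mul_single_mul, coeff_single_mul_mul, one_mul, mul_one]; exact hf.1,
    fun x hx => ?_⟩
  obtain ⟨y, hy, rfl⟩ := Finset.mem_image.1 (support_coeff_mul_single_subset _ _ _ hx)
  obtain ⟨z, hz, rfl⟩ := Finset.mem_image.1 (support_coeff_single_mul_subset _ _ _ hy)
  exact mul_le_mul' (mul_le_mul' le_rfl (hf.2 z hz)) le_rfl

theorem linearIndependent_of_isLeadingMonomial [LinearOrder M] {s : Set M}
    {f : M → MonoidAlgebra k M} (hf : ∀ w ∈ s, IsLeadingMonomial (f w) w) :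
    LinearIndependent k (fun w : s => f w) := by
  rw [linearIndependent_iff']
  intro t c hsum j hj
  by_contra hcj
  set t' := t.filter (c · ≠ 0)
  have ht' : t'.Nonempty := ⟨j, Finset.mem_filter.2 ⟨hj, hcj⟩⟩
  set w := t'.max' ht'
  obtain ⟨hwt, hcw⟩ := Finset.mem_filter.1 (t'.max'_mem ht')
  -- `w` is the largest index with `c w ≠ 0`, so only `f w` contributes to the coefficient of `w`
  have hcoeff : (∑ i ∈ t, c i • f i).coeff w = c w * (f w).coeff w := by
    rw [coeff_sum, Finsupp.finsetSum_apply, Finset.sum_eq_single w]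
    · rfl
    · intro i hi hiw
      by_cases hci : c i = 0
      · simp [hci]
      · have hiw' : i < w := lt_of_le_of_ne (t'.le_max' i (Finset.mem_filter.2 ⟨hi, hci⟩)) hiw
        have : (f i).coeff w = 0 := by
          by_contra h
          exact absurd ((hf i i.2).2 w (Finsupp.mem_support_iff.2 h)) (not_le.2 hiw')
        simp [this]
    · exact fun h => absurd hwt h
  rw [hsum] at hcoeff
  exact mul_ne_zero hcw (hf w w.2).1 hcoeff.symm

theorem ncard_le_finrank_of_isLeadingMonomial [LinearOrder M]
    {W : Submodule k (MonoidAlgebra k M)} [FiniteDimensional k W] {D : Set M} (hD : D.Finite)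
    (hW : ∀ w ∈ D, ∃ f ∈ W, IsLeadingMonomial f w) : D.ncard ≤ finrank k W := by
  have := hD.fintype
  choose! f hfW hf using hW
  have hli : LinearIndependent k (fun w : D => (⟨f w, hfW w w.2⟩ : W)) :=
    .of_comp W.subtype (linearIndependent_of_isLeadingMonomial hf)
  rw [← Nat.card_coe_set_eq, Nat.card_eq_fintype_card]
  exact hli.fintype_card_le_finrank

theorem finrank_le_ncard_of_exists_coeff_ne_zero {W : Submodule k (MonoidAlgebra k M)}
    {D : Set M} (hD : D.Finite) (hW : ∀ f ∈ W, f ≠ 0 → ∃ w ∈ D, f.coeff w ≠ 0) :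
    finrank k W ≤ D.ncard := by
  have := hD.fintype
  let ρ : W →ₗ[k] D → k := LinearMap.pi fun w => ((basis M k).coord w).comp W.subtype
  have hρ : Function.Injective ρ := by
    rw [← LinearMap.ker_eq_bot, LinearMap.ker_eq_bot']
    intro f hf
    by_contra hf0
    obtain ⟨w, hwD, hw⟩ := hW f f.2 (by simpa using hf0)
    exact hw (congrFun hf ⟨w, hwD⟩)
  calc finrank k W ≤ finrank k (D → k) := LinearMap.finrank_le_finrank_of_injective hρ
    _ = D.ncard := by
      rw [finrank_fintype_fun_eq_card, ← Nat.card_coe_set_eq, Nat.card_eq_fintype_card]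

end LeadingMonomial

section Supported

variable {M : Type*}

theorem finrank_supported {S : Set M} (hS : S.Finite) :
    finrank k (supported k k S) = S.ncard := by
  have := hS.fintype
  rw [(supportedEquivFinsupp (R := k) (S := k) S).finrank_eq, finrank_finsupp_self,
    ← Nat.card_coe_set_eq, Nat.card_eq_fintype_card]

theorem finiteDimensional_supported {S : Set M} (hS : S.Finite) :
    FiniteDimensional k (supported k k S) := by
  have := hS.fintype
  exact .equiv (supportedEquivFinsupp S).symm

theorem supported_inf (S T : Set M) :
    supported k k S ⊓ supported k k T = supported k k (S ∩ T) := by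
  ext f
  simp [mem_supported, Set.subset_inter_iff]

theorem finrank_quotient_comap_supported_eq_ncard_sdiff {S : Set M} (hS : S.Finite) (D : Set M)
    {J : Submodule k (MonoidAlgebra k M)}
    (hJ : finrank k ↥(J ⊓ supported k k S) = (S ∩ D).ncard) :
    finrank k (supported k k S ⧸ J.comap (supported k k S).subtype) = (S \ D).ncard := by
  have := finiteDimensional_supported (k := k) hS
  have hcomap : finrank k (J.comap (supported k k S).subtype) =
      finrank k ↥(J ⊓ supported k k S) := by
    rw [← (Submodule.comapSubtypeEquivOfLe inf_le_right).finrank_eq, Submodule.comap_inf,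
      Submodule.comap_subtype_self, inf_top_eq]
  have := Submodule.finrank_quotient_add_finrank (J.comap (supported k k S).subtype)
  have := Set.ncard_inter_add_ncard_sdiff_eq_ncard S D hS
  rw [finrank_supported hS] at *
  omega

theorem finrank_quotient_comap_supported_supported {S : Set M} (hS : S.Finite) (D : Set M) :
    finrank k (supported k k S ⧸ (supported k k D).comap (supported k k S).subtype) =
      (S \ D).ncard :=
  finrank_quotient_comap_supported_eq_ncard_sdiff hS D <| by
    rw [supported_inf, Set.inter_comm, finrank_supported (hS.inter_of_left D)]

variable [Monoid M]

def wordsWithFactorIn (s : Set M) : Set M := {w | ∃ l ∈ s, ∃ u v, w = u * l * v}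

theorem wordsWithFactorIn_mono {s t : Set M} (h : s ⊆ t) :
    wordsWithFactorIn s ⊆ wordsWithFactorIn t :=
  fun _ ⟨l, hl, u, v, hw⟩ => ⟨l, h hl, u, v, hw⟩

theorem span_mul_single_mul_eq_supported (s : Set M) :
    Submodule.span k {f | ∃ a b : MonoidAlgebra k M, ∃ l ∈ s, f = a * single l 1 * b} =
      supported k k (wordsWithFactorIn s) := by
  apply le_antisymm
  · rw [Submodule.span_le]
    rintro _ ⟨a, b, l, hl, rfl⟩ w hw
    obtain ⟨y, hy, v, -, rfl⟩ := Finset.mem_mul.1 (support_coeff_mul_subset _ b hw)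
    obtain ⟨u, -, l', hl', rfl⟩ := Finset.mem_mul.1 (support_coeff_mul_subset a _ hy)
    rw [coeff_single, Finsupp.support_single _ one_ne_zero, Finset.mem_singleton] at hl'
    exact ⟨l, hl, u, v, hl' ▸ rfl⟩
  · rw [supported_eq_span_single]
    refine Submodule.span_mono ?_
    rintro _ ⟨_, ⟨l, hl, u, v, rfl⟩, rfl⟩
    exact ⟨single u 1, single v 1, l, hl, by simp only [single_mul_single, mul_one]⟩

end Supported

section FreeMonoid

variable {α : Type*}

theorem finite_setOf_length_eq [Finite α] (i : ℕ) :
    {w : FreeMonoid α | w.length = i}.Finite :=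
  List.finite_length_eq α i

theorem wordSpanX_eq_supported (i : ℕ) :
    wordSpanX k α i = supported k k {w : FreeMonoid α | w.length = i} := by
  rw [supported_eq_span_single, wordSpanX]
  congr 1
  ext f
  exact ⟨fun ⟨w, hw, h⟩ => ⟨w, hw, h.symm⟩, fun ⟨w, hw, h⟩ => ⟨w, hw, h.symm⟩⟩

theorem finrank_wordSpanX_quotient_comap_supported [Finite α] (D : Set (FreeMonoid α)) (i : ℕ) :
    finrank k (wordSpanX k α i ⧸ (supported k k D).comap (wordSpanX k α i).subtype) =
      ({w | w.length = i} \ D).ncard := by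
  rw [wordSpanX_eq_supported]
  exact finrank_quotient_comap_supported_supported (finite_setOf_length_eq i) D

variable [LinearOrder (FreeMonoid α)]

theorem isLeadingMonomial_leadMon {f : MonoidAlgebra k (FreeMonoid α)} (hf : f ≠ 0) :
    IsLeadingMonomial f (leadMon f) := by
  rw [leadMon, dif_neg hf]
  exact ⟨Finsupp.mem_support_iff.1 (Finset.max'_mem _ _), fun v hv => Finset.le_max' _ _ hv⟩

theorem length_le_length_leadMon (hlen : ∀ u v : FreeMonoid α, u.length < v.length → u < v)
    {f : MonoidAlgebra k (FreeMonoid α)} (hf : f ≠ 0) {v : FreeMonoid α}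
    (hv : v ∈ f.coeff.support) : v.length ≤ (leadMon f).length :=
  not_lt.1 fun h => not_lt.2 ((isLeadingMonomial_leadMon hf).2 v hv) (hlen _ _ h)

theorem wordsWithFactorIn_leadMon_truncation_subset (𝒢 : Set (MonoidAlgebra k (FreeMonoid α)))
    (m : ℕ) :
    wordsWithFactorIn (leadMon '' {g ∈ 𝒢 | g ≠ 0 ∧ ∀ w ∈ g.coeff.support, w.length ≤ m}) ⊆
      wordsWithFactorIn (leadMon '' {g ∈ 𝒢 | g ≠ 0}) :=
  wordsWithFactorIn_mono (Set.image_mono fun _ hg => ⟨hg.1, hg.2.1⟩)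

theorem setOf_length_sdiff_wordsWithFactorIn_leadMon
    (hlen : ∀ u v : FreeMonoid α, u.length < v.length → u < v)
    (𝒢 : Set (MonoidAlgebra k (FreeMonoid α))) {i m : ℕ} (hi : i ≤ m) :
    {w : FreeMonoid α | w.length = i} \ wordsWithFactorIn (leadMon '' {g ∈ 𝒢 | g ≠ 0}) =
      {w | w.length = i} \ wordsWithFactorIn
        (leadMon '' {g ∈ 𝒢 | g ≠ 0 ∧ ∀ w ∈ g.coeff.support, w.length ≤ m}) := by
  refine (Set.sdiff_subset_sdiff_right
    (wordsWithFactorIn_leadMon_truncation_subset 𝒢 m)).antisymm ?_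
  rintro w ⟨hw, hwm⟩
  refine ⟨hw, ?_⟩
  rintro ⟨_, ⟨g, ⟨hg, hg0⟩, rfl⟩, u, v, rfl⟩
  refine hwm ⟨_, ⟨g, ⟨hg, hg0, fun x hx => ?_⟩, rfl⟩, u, v, rfl⟩
  have := length_le_length_leadMon hlen hg0 hx
  simp only [Set.mem_ofPred_eq, FreeMonoid.length_mul] at hw
  omega

section GroebnerBasis

variable [MulLeftMono (FreeMonoid α)] [MulRightMono (FreeMonoid α)]
  {I : Submodule k (MonoidAlgebra k (FreeMonoid α))} {𝒢 : Set (MonoidAlgebra k (FreeMonoid α))}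

theorem exists_mem_isLeadingMonomial_of_mem_wordsWithFactorIn
    (hI2 : ∀ a b : MonoidAlgebra k (FreeMonoid α), ∀ x ∈ I, a * x * b ∈ I)
    (hIhom : ∀ f ∈ I, ∀ i : ℕ,
      ofCoeff (f.coeff.filter fun w : FreeMonoid α => w.length = i) ∈ I)
    (h𝒢I : 𝒢 ⊆ I) {w : FreeMonoid α}
    (hw : w ∈ wordsWithFactorIn (leadMon '' {g ∈ 𝒢 | g ≠ 0})) :
    ∃ f ∈ I ⊓ supported k k {v : FreeMonoid α | v.length = w.length},
      IsLeadingMonomial f w := by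
  obtain ⟨_, ⟨g, ⟨hg, hg0⟩, rfl⟩, u, v, rfl⟩ := hw
  refine ⟨ofCoeff ((single u 1 * g * single v 1).coeff.filter
      (·.length = (u * leadMon g * v).length)),
    ⟨hIhom _ (hI2 _ _ g (h𝒢I hg)) _, mem_supported.2 ?_⟩,
    ((isLeadingMonomial_leadMon hg0).single_mul_mul_single u v).filter
      (p := (·.length = (u * leadMon g * v).length)) rfl⟩
  rw [coeff_ofCoeff, Finsupp.support_filter]
  exact fun x hx => (Finset.mem_filter.1 hx).2

theorem finrank_inf_supported_length_eq_ncard [Finite α]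
    (hI2 : ∀ a b : MonoidAlgebra k (FreeMonoid α), ∀ x ∈ I, a * x * b ∈ I)
    (hIhom : ∀ f ∈ I, ∀ i : ℕ,
      ofCoeff (f.coeff.filter fun w : FreeMonoid α => w.length = i) ∈ I)
    (h𝒢I : 𝒢 ⊆ I)
    (hGB : ∀ f ∈ I, f ≠ 0 → ∃ g ∈ 𝒢, g ≠ 0 ∧
      ∃ u u' : FreeMonoid α, leadMon f = u * leadMon g * u')
    (i : ℕ) :
    finrank k ↥(I ⊓ supported k k {w : FreeMonoid α | w.length = i}) =
      ({w | w.length = i} ∩ wordsWithFactorIn (leadMon '' {g ∈ 𝒢 | g ≠ 0})).ncard := by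
  have hS := finite_setOf_length_eq (α := α) i
  have := finiteDimensional_supported (k := k) hS
  refine le_antisymm
    (finrank_le_ncard_of_exists_coeff_ne_zero (hS.inter_of_left _) fun f hf hf0 => ?_)
    (ncard_le_finrank_of_isLeadingMonomial (hS.inter_of_left _) fun w hw => ?_)
  · have hlead := isLeadingMonomial_leadMon hf0
    obtain ⟨g, hg, hg0, u, v, hfg⟩ := hGB f hf.1 hf0
    exact ⟨leadMon f, ⟨hf.2 (Finsupp.mem_support_iff.2 hlead.1),
      _, ⟨g, ⟨hg, hg0⟩, rfl⟩, u, v, hfg⟩, hlead.1⟩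
  · obtain ⟨rfl, hwD⟩ := hw
    exact exists_mem_isLeadingMonomial_of_mem_wordsWithFactorIn hI2 hIhom h𝒢I hwD

theorem finrank_wordSpanX_quotient_eq_ncard_sdiff [Finite α]
    (hI2 : ∀ a b : MonoidAlgebra k (FreeMonoid α), ∀ x ∈ I, a * x * b ∈ I)
    (hIhom : ∀ f ∈ I, ∀ i : ℕ,
      ofCoeff (f.coeff.filter fun w : FreeMonoid α => w.length = i) ∈ I)
    (h𝒢I : 𝒢 ⊆ I)
    (hGB : ∀ f ∈ I, f ≠ 0 → ∃ g ∈ 𝒢, g ≠ 0 ∧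
      ∃ u u' : FreeMonoid α, leadMon f = u * leadMon g * u')
    (i : ℕ) :
    finrank k (wordSpanX k α i ⧸ I.comap (wordSpanX k α i).subtype) =
      ({w | w.length = i} \ wordsWithFactorIn (leadMon '' {g ∈ 𝒢 | g ≠ 0})).ncard := by
  rw [wordSpanX_eq_supported]
  exact finrank_quotient_comap_supported_eq_ncard_sdiff (finite_setOf_length_eq i) _
    (finrank_inf_supported_length_eq_ncard hI2 hIhom h𝒢I hGB i)

end GroebnerBasis

end FreeMonoid

end MonoidAlgebra

/-- Let A = k⟨X⟩/I with I a homogeneous two-sided ideal, 𝒢 a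
Gröbner basis of I with respect to a monomial order, 𝒢_m its elements of degree
≤ m, and A' = k⟨X⟩/(LM(𝒢_m)). Then dim_k A'_i ≥ dim_k A_i for all i, with
equality for i ≤ m. -/
theorem hilbert_series_leading_monomial_truncation
    -- the monomial order is admissible
    (hmul : ∀ u v w : FreeMonoid X, u < v → u * w < v * w ∧ w * u < w * v)
    (hlen : ∀ u v : FreeMonoid X, u.length < v.length → u < v)
    -- I is a homogeneous two-sided ideal
    (I : Submodule k (MonoidAlgebra k (FreeMonoid X)))
    (hI2 : ∀ a b : MonoidAlgebra k (FreeMonoid X), ∀ x ∈ I, a * x * b ∈ I)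
    (hIhom : ∀ f ∈ I, ∀ i : ℕ,
      MonoidAlgebra.ofCoeff (f.coeff.filter fun w : FreeMonoid X => w.length = i) ∈ I)
    -- 𝒢 is a Gröbner basis of I
    (𝒢 : Set (MonoidAlgebra k (FreeMonoid X))) (h𝒢I : 𝒢 ⊆ I)
    (hGB : ∀ f ∈ I, f ≠ 0 → ∃ g ∈ 𝒢, g ≠ 0 ∧
      ∃ u u' : FreeMonoid X, leadMon f = u * leadMon g * u')
    (m : ℕ) :
    -- I' is the two-sided ideal generated by the leading monomials of 𝒢_m
    ∀ I' : Submodule k (MonoidAlgebra k (FreeMonoid X)),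
      I' = Submodule.span k
        {f | ∃ (a b : MonoidAlgebra k (FreeMonoid X)) (g : MonoidAlgebra k (FreeMonoid X)),
          g ∈ 𝒢 ∧ g ≠ 0 ∧ (∀ w ∈ g.coeff.support, w.length ≤ m) ∧
          f = a * MonoidAlgebra.single (leadMon g) (1 : k) * b} →
      (∀ i : ℕ,
        Module.finrank k
          (↥(wordSpanX k X i) ⧸ I.comap (wordSpanX k X i).subtype) ≤
        Module.finrank k
          (↥(wordSpanX k X i) ⧸ I'.comap (wordSpanX k X i).subtype)) ∧
      (∀ i : ℕ, i ≤ m →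
        Module.finrank k
          (↥(wordSpanX k X i) ⧸ I.comap (wordSpanX k X i).subtype) =
        Module.finrank k
          (↥(wordSpanX k X i) ⧸ I'.comap (wordSpanX k X i).subtype)) := by
  intro I' hI'
  have : MulLeftMono (FreeMonoid X) :=
    ⟨fun w u v h => h.eq_or_lt.elim (fun h => h ▸ le_rfl) fun h => (hmul u v w h).2.le⟩
  have : MulRightMono (FreeMonoid X) :=
    ⟨fun w u v h => h.eq_or_lt.elim (fun h => h ▸ le_rfl) fun h => (hmul u v w h).1.le⟩
  have hI'_eq : I' = supported k k (wordsWithFactorIn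
      (leadMon '' {g ∈ 𝒢 | g ≠ 0 ∧ ∀ w ∈ g.coeff.support, w.length ≤ m})) := by
    rw [hI', ← span_mul_single_mul_eq_supported]
    simp only [Set.mem_image, exists_exists_and_eq_and]
    simp only [Set.mem_ofPred_eq, and_assoc]
  subst hI'_eq
  refine ⟨fun i => ?_, fun i hi => ?_⟩ <;>
    rw [finrank_wordSpanX_quotient_eq_ncard_sdiff hI2 hIhom h𝒢I hGB,
      finrank_wordSpanX_quotient_comap_supported]
  · exact Set.ncard_le_ncard (Set.sdiff_subset_sdiff_right
      (wordsWithFactorIn_leadMon_truncation_subset 𝒢 m)) (finite_setOf_length_eq i).sdiff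
  · rw [setOf_length_sdiff_wordsWithFactorIn_leadMon hlen 𝒢 hi]
end

section
/- The noncommutative algebra 𝒥 = k⟨x₁,x₂⟩/(f₁, f₂), where f₁ = x₁x₂² − 2x₂x₁x₂ + x₂²x₁ and f₂ = x₁³x₂ − 3x₁²x₂x₁ + 3x₁x₂x₁² − x₂x₁³ + (1−u)x₁x₂x₁x₂ + u x₂x₁²x₂ + (u−3)x₂x₁x₂x₁ + (2−u)x₂²x₁² − v x₂²x₁x₂ + v x₂³x₁ + w x₂⁴ (u,v,w ∈ k), is isomorphic as a graded algebra to the Ore extension B[x₁; id, δ], where B = k[x₂, z₁, z₂] is the commutative polynomial algebra with deg x₂ = 1, deg z₁ = 2, deg z₂ = 3, and δ is the k-derivation of B determined by δ(x₂) = z₁, δ(z₁) = z₂, δ(z₂) = (u−1)z₁² − x₂z₂ + v x₂²z₁ − w x₂⁴. -/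
/-!
Write `z₁ = ⁅x₁, x₂⁆` and `z₂ = ⁅x₁, z₁⁆`. Then `f₁ = ⁅z₁, x₂⁆` and
`f₂ = ⁅x₁, z₂⁆ - δ(z₂) + (1 - u) f₁ x₁`, where `δ(z₂)` is the prescribed polynomial in
`x₂, z₁, z₂`: the relations say exactly that `x₂` commutes with `z₁` and that `ad x₁` sends `z₂`
to `δ(z₂)`. By the Jacobi identity `x₂, z₁, z₂` then commute pairwise, which gives a map `B → 𝒥`
intertwining `δ` with `ad x₁`. Hence `𝒥` is spanned by the sums `∑ bₙ x₁ⁿ`. The same identities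
show that `x₁ ↦ Y, x₂ ↦ x₂` defines a map `𝒥 → B[x₁; id, δ]`; it sends these spanning sums to
the free normal forms of the Ore extension, so it is bijective.
-/

/-- The defining relations of the Jordan-type algebra 𝒥 = k⟨x₁,x₂⟩/(f₁,f₂). -/
inductive JordanRel (k : Type*) [Field k] (u v w : k) :
    FreeAlgebra k (Fin 2) → FreeAlgebra k (Fin 2) → Prop
  | rel1 : JordanRel k u v w
      (FreeAlgebra.ι k 0 * FreeAlgebra.ι k 1 ^ 2
        - 2 * (FreeAlgebra.ι k 1 * FreeAlgebra.ι k 0 * FreeAlgebra.ι k 1)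
        + FreeAlgebra.ι k 1 ^ 2 * FreeAlgebra.ι k 0) 0
  | rel2 : JordanRel k u v w
      (FreeAlgebra.ι k 0 ^ 3 * FreeAlgebra.ι k 1
        - 3 * (FreeAlgebra.ι k 0 ^ 2 * FreeAlgebra.ι k 1 * FreeAlgebra.ι k 0)
        + 3 * (FreeAlgebra.ι k 0 * FreeAlgebra.ι k 1 * FreeAlgebra.ι k 0 ^ 2)
        - FreeAlgebra.ι k 1 * FreeAlgebra.ι k 0 ^ 3
        + (1 - u) • (FreeAlgebra.ι k 0 * FreeAlgebra.ι k 1 * FreeAlgebra.ι k 0 * FreeAlgebra.ι k 1)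
        + u • (FreeAlgebra.ι k 1 * FreeAlgebra.ι k 0 ^ 2 * FreeAlgebra.ι k 1)
        + (u - 3) • (FreeAlgebra.ι k 1 * FreeAlgebra.ι k 0 * FreeAlgebra.ι k 1 * FreeAlgebra.ι k 0)
        + (2 - u) • (FreeAlgebra.ι k 1 ^ 2 * FreeAlgebra.ι k 0 ^ 2)
        - v • (FreeAlgebra.ι k 1 ^ 2 * FreeAlgebra.ι k 0 * FreeAlgebra.ι k 1)
        + v • (FreeAlgebra.ι k 1 ^ 3 * FreeAlgebra.ι k 0)
        + w • (FreeAlgebra.ι k 1 ^ 4)) 0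

open MvPolynomial

attribute [local instance] LieRing.ofAssociativeRing

namespace MvPolynomial

variable {σ k R : Type*} [CommRing k] [Ring R] [Algebra k R]

open scoped IsMulCommutative in
noncomputable def aevalOfCommute (g : σ → R) (hg : ∀ i j, Commute (g i) (g j)) :
    MvPolynomial σ k →ₐ[k] R :=
  have := Algebra.isMulCommutative_adjoin k (s := Set.range g)
    (by rintro _ ⟨i, rfl⟩ _ ⟨j, rfl⟩; exact hg i j)
  (Algebra.adjoin k (Set.range g)).val.comp
    (aeval fun i => ⟨g i, Algebra.subset_adjoin ⟨i, rfl⟩⟩)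

@[simp]
theorem aevalOfCommute_X (g : σ → R) (hg : ∀ i j, Commute (g i) (g j)) (i : σ) :
    aevalOfCommute (k := k) g hg (X i) = g i := by
  simp [aevalOfCommute]

theorem lie_map_eq_map_derivation_of_forall_X (ψ : MvPolynomial σ k →ₐ[k] R)
    (δ : Derivation k (MvPolynomial σ k) (MvPolynomial σ k)) {a : R}
    (h : ∀ i, ⁅a, ψ (X i)⁆ = ψ (δ (X i))) (p : MvPolynomial σ k) :
    ⁅a, ψ p⁆ = ψ (δ p) := by
  induction p using MvPolynomial.induction_on with
  | C r =>
    rw [← algebraMap_eq, AlgHom.commutes, δ.map_algebraMap, map_zero, ← commute_iff_lie_eq]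
    exact (Algebra.commutes r a).symm
  | add p q hp hq => rw [map_add, lie_add, hp, hq, map_add, map_add]
  | mul_X p i hp =>
    have hcomm : ψ (δ p) * ψ (X i) = ψ (X i) * ψ (δ p) := by
      rw [← map_mul, ← map_mul, mul_comm]
    rw [map_mul, Derivation.leibniz, map_add, smul_eq_mul, smul_eq_mul, map_mul, map_mul,
      ← hcomm, ← h, ← hp]
    simp only [Ring.lie_def]
    noncomm_ring

end MvPolynomial

section OreSum

variable {k P R S : Type*} [CommRing k] [CommRing P] [Algebra k P] [Ring R] [Algebra k R]
  [Ring S] [Algebra k S] (ψ : P →ₐ[k] R) (a : R)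

/-- The normal forms `∑ₙ ψ (fₙ) * aⁿ` of the elements of an Ore extension `P[a; id, δ]`. -/
noncomputable def oreSum : (ℕ →₀ P) →ₗ[k] R :=
  Finsupp.lsum k fun n => (LinearMap.mulRight k (a ^ n)).comp ψ.toLinearMap

theorem oreSum_apply (f : ℕ →₀ P) : oreSum ψ a f = f.sum fun n b => ψ b * a ^ n :=
  Finsupp.lsum_apply _ _ _

@[simp]
theorem oreSum_single (n : ℕ) (b : P) : oreSum ψ a (Finsupp.single n b) = ψ b * a ^ n := by
  simp [oreSum]

theorem map_oreSum (φ : R →ₐ[k] S) (f : ℕ →₀ P) :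
    φ (oreSum ψ a f) = oreSum (φ.comp ψ) (φ a) f := by
  simp [oreSum_apply, map_finsuppSum]

theorem mul_mem_range_oreSum {x q : R}
    (hx : ∀ n b, x * (ψ b * a ^ n) ∈ LinearMap.range (oreSum ψ a))
    (hq : q ∈ LinearMap.range (oreSum ψ a)) : x * q ∈ LinearMap.range (oreSum ψ a) := by
  obtain ⟨f, rfl⟩ := hq
  induction f using Finsupp.induction_linear with
  | zero => simp
  | add f g hf hg => rw [map_add, mul_add]; exact add_mem hf hg
  | single n b => rw [oreSum_single]; exact hx n b

theorem range_oreSum_eq_top (δ : Derivation k P P) (hψ : ∀ p, ⁅a, ψ p⁆ = ψ (δ p))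
    (hgen : Algebra.adjoin k (insert a (Set.range ψ)) = ⊤) :
    LinearMap.range (oreSum ψ a) = ⊤ := by
  have hmul : ∀ x ∈ Algebra.adjoin k (insert a (Set.range ψ)),
      ∀ q ∈ LinearMap.range (oreSum ψ a), x * q ∈ LinearMap.range (oreSum ψ a) := by
    intro x hx
    induction hx using Algebra.adjoin_induction with
    | mem x hx =>
      rcases hx with rfl | ⟨p, rfl⟩
      · refine fun q => mul_mem_range_oreSum ψ x fun n b => ?_
        refine ⟨Finsupp.single (n + 1) b + Finsupp.single n (δ b), ?_⟩
        rw [map_add, oreSum_single, oreSum_single, ← hψ, Ring.lie_def, pow_succ']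
        noncomm_ring
      · refine fun q => mul_mem_range_oreSum ψ a fun n b => ⟨Finsupp.single n (p * b), ?_⟩
        rw [oreSum_single, map_mul, mul_assoc]
    | algebraMap r =>
      intro q hq
      rw [Algebra.algebraMap_eq_smul_one, smul_mul_assoc, one_mul]
      exact Submodule.smul_mem _ r hq
    | add x y _ _ hx hy => intro q hq; rw [add_mul]; exact add_mem (hx q hq) (hy q hq)
    | mul x y _ _ hx hy => intro q hq; rw [mul_assoc]; exact hx _ (hy q hq)
  refine eq_top_iff.2 fun x _ => ?_
  simpa using hmul x (hgen ▸ Algebra.mem_top) 1 ⟨Finsupp.single 0 1, by simp⟩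

end OreSum

section JordanRelations

variable {k R : Type*} [CommRing k] [Ring R] [Algebra k R] (u v w : k)

def jordanF₁ (a b : R) : R := a * b ^ 2 - 2 * (b * a * b) + b ^ 2 * a

def jordanF₂ (a b : R) : R :=
  a ^ 3 * b - 3 * (a ^ 2 * b * a) + 3 * (a * b * a ^ 2) - b * a ^ 3
    + (1 - u) • (a * b * a * b) + u • (b * a ^ 2 * b) + (u - 3) • (b * a * b * a)
    + (2 - u) • (b ^ 2 * a ^ 2) - v • (b ^ 2 * a * b) + v • (b ^ 3 * a) + w • b ^ 4

/-- The value of `δ(z₂)` as a function of `x₂, z₁, z₂`. -/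
def jordanDerivZ₂ (x z₁ z₂ : R) : R :=
  (u - 1) • z₁ ^ 2 - x * z₂ + v • (x ^ 2 * z₁) - w • x ^ 4

variable {u v w}

theorem AlgHom.map_jordanF₁ {S : Type*} [Ring S] [Algebra k S] (φ : R →ₐ[k] S) (a b : R) :
    φ (jordanF₁ a b) = jordanF₁ (φ a) (φ b) := by
  simp [jordanF₁, map_ofNat φ]

theorem AlgHom.map_jordanF₂ {S : Type*} [Ring S] [Algebra k S] (φ : R →ₐ[k] S) (a b : R) :
    φ (jordanF₂ u v w a b) = jordanF₂ u v w (φ a) (φ b) := by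
  simp [jordanF₂, map_ofNat φ]

theorem map_jordanDerivZ₂_poly (ψ : MvPolynomial (Fin 3) k →ₐ[k] R) :
    ψ (C (u - 1) * X 1 ^ 2 - X 0 * X 2 + C v * X 0 ^ 2 * X 1 - C w * X 0 ^ 4) =
      jordanDerivZ₂ u v w (ψ (X 0)) (ψ (X 1)) (ψ (X 2)) := by
  simp [jordanDerivZ₂, Algebra.smul_def, mul_assoc]

theorem jordanF₁_eq_lie (a b : R) : jordanF₁ a b = ⁅⁅a, b⁆, b⁆ := by
  simp only [jordanF₁, Ring.lie_def]
  noncomm_ring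

theorem jordanF₂_eq_lie (a b : R) :
    jordanF₂ u v w a b = ⁅a, ⁅a, ⁅a, b⁆⁆⁆ - jordanDerivZ₂ u v w b ⁅a, b⁆ ⁅a, ⁅a, b⁆⁆
      + (1 - u) • (jordanF₁ a b * a) := by
  simp only [jordanF₂, jordanF₁, jordanDerivZ₂, Ring.lie_def]
  simp only [mul_sub, sub_mul, add_mul, smul_sub, smul_add, mul_assoc,
    pow_succ, pow_zero, one_mul]
  rw [show (3 : R) = (3 : k) • 1 by simp [Algebra.smul_def, map_ofNat],
    show (2 : R) = (2 : k) • 1 by simp [Algebra.smul_def, map_ofNat]]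
  simp only [smul_mul_assoc, one_mul, smul_smul]
  module

theorem jordanF_eq_zero_iff (a b : R) :
    jordanF₁ a b = 0 ∧ jordanF₂ u v w a b = 0 ↔
      ⁅⁅a, b⁆, b⁆ = 0 ∧ ⁅a, ⁅a, ⁅a, b⁆⁆⁆ = jordanDerivZ₂ u v w b ⁅a, b⁆ ⁅a, ⁅a, b⁆⁆ := by
  rw [jordanF₂_eq_lie, jordanF₁_eq_lie]
  refine and_congr_right fun h₁ => ?_
  rw [h₁, zero_mul, smul_zero, add_zero, sub_eq_zero]

theorem commute_of_lie_eq_jordanDerivZ₂ {a b : R} (h₁ : ⁅⁅a, b⁆, b⁆ = 0)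
    (h₂ : ⁅a, ⁅a, ⁅a, b⁆⁆⁆ = jordanDerivZ₂ u v w b ⁅a, b⁆ ⁅a, ⁅a, b⁆⁆) (i j : Fin 3) :
    Commute (![b, ⁅a, b⁆, ⁅a, ⁅a, b⁆⁆] i) (![b, ⁅a, b⁆, ⁅a, ⁅a, b⁆⁆] j) := by
  have hbz₁ : Commute b ⁅a, b⁆ := commute_iff_lie_eq.2 (by rw [← lie_skew, h₁, neg_zero])
  have hbz₂ : Commute b ⁅a, ⁅a, b⁆⁆ := by
    rw [commute_iff_lie_eq, leibniz_lie, ← lie_skew b a, neg_lie, lie_self, neg_zero, zero_add,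
      hbz₁.lie_eq, lie_zero]
  have hbE : Commute b (jordanDerivZ₂ u v w b ⁅a, b⁆ ⁅a, ⁅a, b⁆⁆) :=
    ((((hbz₁.pow_right 2).smul_right _).sub_right ((Commute.refl b).mul_right hbz₂)).add_right
      ((((Commute.refl b).pow_right 2).mul_right hbz₁).smul_right _)).sub_right
      (((Commute.refl b).pow_right 4).smul_right _)
  -- Jacobi: `⁅z₁, z₂⁆ = ⁅a, ⁅b, z₂⁆⁆ - ⁅b, δ z₂⁆`, and `δ z₂` is a polynomial in `b, z₁, z₂`.
  have hz₁z₂ : Commute ⁅a, b⁆ ⁅a, ⁅a, b⁆⁆ := by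
    rw [commute_iff_lie_eq, lie_lie, hbz₂.lie_eq, lie_zero, h₂, hbE.lie_eq, sub_zero]
  fin_cases i <;> fin_cases j <;> simp [hbz₁, hbz₂, hz₁z₂, hbz₁.symm, hbz₂.symm, hz₁z₂.symm]

end JordanRelations

section OreJordan

variable {k R : Type*} [CommRing k] [Ring R] [Algebra k R] {u v w : k}
  {δ : Derivation k (MvPolynomial (Fin 3) k) (MvPolynomial (Fin 3) k)}

theorem jordanF_eq_zero_of_lie_eq_map_derivation (hδ0 : δ (X 0) = X 1) (hδ1 : δ (X 1) = X 2)
    (hδ2 : δ (X 2) = C (u - 1) * X 1 ^ 2 - X 0 * X 2 + C v * X 0 ^ 2 * X 1 - C w * X 0 ^ 4)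
    (ψ : MvPolynomial (Fin 3) k →ₐ[k] R) {a : R} (hψ : ∀ p, ⁅a, ψ p⁆ = ψ (δ p)) :
    jordanF₁ a (ψ (X 0)) = 0 ∧ jordanF₂ u v w a (ψ (X 0)) = 0 := by
  have h0 : ⁅a, ψ (X 0)⁆ = ψ (X 1) := by rw [hψ, hδ0]
  have h1 : ⁅a, ψ (X 1)⁆ = ψ (X 2) := by rw [hψ, hδ1]
  rw [jordanF_eq_zero_iff, h0, h1, hψ, hδ2, map_jordanDerivZ₂_poly]
  exact ⟨((Commute.all _ _).map ψ).lie_eq, rfl⟩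

theorem exists_lie_eq_map_derivation_of_jordanF_eq_zero (hδ0 : δ (X 0) = X 1)
    (hδ1 : δ (X 1) = X 2)
    (hδ2 : δ (X 2) = C (u - 1) * X 1 ^ 2 - X 0 * X 2 + C v * X 0 ^ 2 * X 1 - C w * X 0 ^ 4)
    {a b : R} (h : jordanF₁ a b = 0 ∧ jordanF₂ u v w a b = 0) :
    ∃ ψ : MvPolynomial (Fin 3) k →ₐ[k] R, ψ (X 0) = b ∧ ∀ p, ⁅a, ψ p⁆ = ψ (δ p) := by
  obtain ⟨h₁, h₂⟩ := (jordanF_eq_zero_iff a b).1 h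
  refine ⟨aevalOfCommute _ (commute_of_lie_eq_jordanDerivZ₂ h₁ h₂), by simp,
    lie_map_eq_map_derivation_of_forall_X _ δ fun
      | 0 => by simp [hδ0]
      | 1 => by simp [hδ1]
      | 2 => by rw [hδ2, map_jordanDerivZ₂_poly]; simpa using h₂⟩

theorem algHom_ext_of_lie_eq_map_derivation (hδ0 : δ (X 0) = X 1) (hδ1 : δ (X 1) = X 2)
    {χ₁ χ₂ : MvPolynomial (Fin 3) k →ₐ[k] R} {a : R} (h₁ : ∀ p, ⁅a, χ₁ p⁆ = χ₁ (δ p))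
    (h₂ : ∀ p, ⁅a, χ₂ p⁆ = χ₂ (δ p)) (h0 : χ₁ (X 0) = χ₂ (X 0)) : χ₁ = χ₂ := by
  have e1 : χ₁ (X 1) = χ₂ (X 1) := by rw [← hδ0, ← h₁, ← h₂, h0]
  have e2 : χ₁ (X 2) = χ₂ (X 2) := by rw [← hδ1, ← h₁, ← h₂, e1]
  exact algHom_ext fun i => by fin_cases i <;> assumption

end OreJordan

theorem RingQuot.adjoin_range_mkAlgHom_comp_ι {k X : Type*} [CommSemiring k]
    (r : FreeAlgebra k X → FreeAlgebra k X → Prop) :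
    Algebra.adjoin k (Set.range (RingQuot.mkAlgHom k r ∘ FreeAlgebra.ι k)) = ⊤ := by
  rw [Set.range_comp, Algebra.adjoin_image, FreeAlgebra.adjoin_range_ι, Algebra.map_top,
    AlgHom.range_eq_top]
  exact RingQuot.mkAlgHom_surjective k r

namespace JordanRel

variable {k S : Type*} [Field k] [Ring S] [Algebra k S] {u v w : k}

theorem jordanF_mkAlgHom_ι :
    jordanF₁ (RingQuot.mkAlgHom k (JordanRel k u v w) (FreeAlgebra.ι k 0))
        (RingQuot.mkAlgHom k (JordanRel k u v w) (FreeAlgebra.ι k 1)) = 0 ∧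
      jordanF₂ u v w (RingQuot.mkAlgHom k (JordanRel k u v w) (FreeAlgebra.ι k 0))
        (RingQuot.mkAlgHom k (JordanRel k u v w) (FreeAlgebra.ι k 1)) = 0 := by
  rw [← AlgHom.map_jordanF₁, ← AlgHom.map_jordanF₂, ← map_zero (RingQuot.mkAlgHom k _)]
  exact ⟨RingQuot.mkAlgHom_rel k rel1, RingQuot.mkAlgHom_rel k rel2⟩

noncomputable def lift (a b : S) (h : jordanF₁ a b = 0 ∧ jordanF₂ u v w a b = 0) :
    RingQuot (JordanRel k u v w) →ₐ[k] S :=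
  RingQuot.liftAlgHom k ⟨FreeAlgebra.lift k ![a, b], fun {x y} hxy => by
    cases hxy
    · exact (AlgHom.map_jordanF₁ _ (FreeAlgebra.ι k 0) _).trans (by simpa using h.1)
    · exact (AlgHom.map_jordanF₂ _ (FreeAlgebra.ι k 0) _).trans (by simpa using h.2)⟩

@[simp]
theorem lift_mkAlgHom_ι_zero (a b : S) (h : jordanF₁ a b = 0 ∧ jordanF₂ u v w a b = 0) :
    lift a b h (RingQuot.mkAlgHom k (JordanRel k u v w) (FreeAlgebra.ι k 0)) = a := by
  simp [lift]

@[simp]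
theorem lift_mkAlgHom_ι_one (a b : S) (h : jordanF₁ a b = 0 ∧ jordanF₂ u v w a b = 0) :
    lift a b h (RingQuot.mkAlgHom k (JordanRel k u v w) (FreeAlgebra.ι k 1)) = b := by
  simp [lift]

end JordanRel

theorem jordan_algebra_is_ore_extension_general (k : Type*) [Field k]
    (u v w : k)
    (δ : Derivation k (MvPolynomial (Fin 3) k) (MvPolynomial (Fin 3) k))
    (hδ0 : δ (MvPolynomial.X 0) = MvPolynomial.X 1)
    (hδ1 : δ (MvPolynomial.X 1) = MvPolynomial.X 2)
    (hδ2 : δ (MvPolynomial.X 2) =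
      (MvPolynomial.C (u - 1)) * (MvPolynomial.X 1) ^ 2
        - (MvPolynomial.X 0) * (MvPolynomial.X 2)
        + (MvPolynomial.C v) * (MvPolynomial.X 0) ^ 2 * (MvPolynomial.X 1)
        - (MvPolynomial.C w) * (MvPolynomial.X 0) ^ 4)
    -- C together with ιB and Y is the Ore extension B[x₁; id, δ]
    (C : Type*) [Ring C] [Algebra k C]
    (ιB : MvPolynomial (Fin 3) k →ₐ[k] C) (Y : C)
    (hcomm : ∀ b : MvPolynomial (Fin 3) k, Y * ιB b = ιB b * Y + ιB (δ b))
    (hfree : ∀ c : C, ∃! f : ℕ →₀ MvPolynomial (Fin 3) k,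
      c = f.sum fun n b => ιB b * Y ^ n) :
    ∃ e : RingQuot (JordanRel k u v w) ≃ₐ[k] C,
      e (RingQuot.mkAlgHom k (JordanRel k u v w) (FreeAlgebra.ι k 0)) = Y ∧
      e (RingQuot.mkAlgHom k (JordanRel k u v w) (FreeAlgebra.ι k 1)) =
        ιB (MvPolynomial.X 0) := by
  set A := RingQuot.mkAlgHom k (JordanRel k u v w) (FreeAlgebra.ι k 0)
  obtain ⟨ψ, hψB, hψ⟩ :=
    exists_lie_eq_map_derivation_of_jordanF_eq_zero hδ0 hδ1 hδ2 JordanRel.jordanF_mkAlgHom_ι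
  have hY : ∀ p, ⁅Y, ιB p⁆ = ιB (δ p) := fun p => by rw [Ring.lie_def, hcomm, add_sub_cancel_left]
  let φ := JordanRel.lift Y (ιB (X 0)) (jordanF_eq_zero_of_lie_eq_map_derivation hδ0 hδ1 hδ2 ιB hY)
  have hφA : φ A = Y := JordanRel.lift_mkAlgHom_ι_zero ..
  have hφψ : φ.comp ψ = ιB := by
    refine algHom_ext_of_lie_eq_map_derivation hδ0 hδ1 (fun p => ?_) hY (by simp [φ, hψB])
    rw [AlgHom.comp_apply, AlgHom.comp_apply, ← hψ, ← hφA]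
    exact ((φ : _ →ₗ⁅k⁆ C).map_lie A (ψ p)).symm
  have hsum : φ ∘ oreSum ψ A = oreSum ιB Y := funext fun f => by
    rw [Function.comp_apply, map_oreSum, hφψ, hφA]
  have hsumC : Function.Bijective (oreSum ιB Y) := (Function.bijective_iff_existsUnique _).2
    fun c => by simpa only [oreSum_apply, eq_comm] using hfree c
  have hgen : Algebra.adjoin k (insert A (Set.range ψ)) = ⊤ := by
    refine eq_top_mono (Algebra.adjoin_mono ?_) (RingQuot.adjoin_range_mkAlgHom_comp_ι _)
    rintro _ ⟨i, rfl⟩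
    fin_cases i
    · exact Set.mem_insert _ _
    · exact Set.mem_insert_of_mem _ ⟨X 0, hψB⟩
  have hsumJ : Function.Bijective (oreSum ψ A) :=
    ⟨(hsum ▸ hsumC.1).of_comp, LinearMap.range_eq_top.1 (range_oreSum_eq_top ψ A δ hψ hgen)⟩
  exact ⟨AlgEquiv.ofBijective φ ((Function.Bijective.of_comp_iff φ hsumJ).1 (hsum ▸ hsumC)),
    hφA, JordanRel.lift_mkAlgHom_ι_one ..⟩

/-- 𝒥 = k⟨x₁,x₂⟩/(f₁,f₂) is isomorphic to the Ore extension
B[x₁; id, δ], where B = k[x₂,z₁,z₂] is a polynomial algebra and δ is the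
derivation with δ(x₂) = z₁, δ(z₁) = z₂,
δ(z₂) = (u−1)z₁² − x₂z₂ + v x₂² z₁ − w x₂⁴. The Ore extension is characterized
by: C contains B via ι, an element Y with Y·b = b·Y + δ(b), and C is a free left
B-module with basis the powers of Y. -/
theorem jordan_algebra_is_ore_extension (k : Type*) [Field k] [CharZero k]
    (u v w : k)
    (δ : Derivation k (MvPolynomial (Fin 3) k) (MvPolynomial (Fin 3) k))
    (hδ0 : δ (MvPolynomial.X 0) = MvPolynomial.X 1)
    (hδ1 : δ (MvPolynomial.X 1) = MvPolynomial.X 2)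
    (hδ2 : δ (MvPolynomial.X 2) =
      (MvPolynomial.C (u - 1)) * (MvPolynomial.X 1) ^ 2
        - (MvPolynomial.X 0) * (MvPolynomial.X 2)
        + (MvPolynomial.C v) * (MvPolynomial.X 0) ^ 2 * (MvPolynomial.X 1)
        - (MvPolynomial.C w) * (MvPolynomial.X 0) ^ 4)
    -- C together with ιB and Y is the Ore extension B[x₁; id, δ]
    (C : Type*) [Ring C] [Algebra k C]
    (ιB : MvPolynomial (Fin 3) k →ₐ[k] C) (Y : C)
    (hcomm : ∀ b : MvPolynomial (Fin 3) k, Y * ιB b = ιB b * Y + ιB (δ b))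
    (hfree : ∀ c : C, ∃! f : ℕ →₀ MvPolynomial (Fin 3) k,
      c = f.sum fun n b => ιB b * Y ^ n) :
    ∃ e : RingQuot (JordanRel k u v w) ≃ₐ[k] C,
      e (RingQuot.mkAlgHom k (JordanRel k u v w) (FreeAlgebra.ι k 0)) = Y ∧
      e (RingQuot.mkAlgHom k (JordanRel k u v w) (FreeAlgebra.ι k 1)) =
        ιB (MvPolynomial.X 0) :=
  jordan_algebra_is_ore_extension_general k u v w δ hδ0 hδ1 hδ2 C ιB Y hcomm hfree
end

section
/- Every graded algebra automorphism σ of 𝒥 = k⟨x₁,x₂⟩/(f₁,f₂) (relations as in the Jordan family, with parameters u,v,w ∈ k) has the form σ(x₁) = a x₁ + b x₂, σ(x₂) = a x₂ for some a ∈ k∖{0}, b ∈ k; conversely every such assignment defines an automorphism. Hence Aut(𝒥) is isomorphic to the group of upper triangular 2×2 matrices (a b; 0 a) with a ≠ 0, i.e. to k^× × k with multiplication (a,b)(a',b') = (aa', ab'+ba'). -/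
/-- The Jordan-type algebra 𝒥. -/
abbrev JordanAlg (k : Type*) [Field k] (u v w : k) := RingQuot (JordanRel k u v w)

/-- The image of x₁ in 𝒥. -/
noncomputable def Jx₁ (k : Type*) [Field k] (u v w : k) : JordanAlg k u v w :=
  RingQuot.mkAlgHom k (JordanRel k u v w) (FreeAlgebra.ι k 0)

/-- The image of x₂ in 𝒥. -/
noncomputable def Jx₂ (k : Type*) [Field k] (u v w : k) : JordanAlg k u v w :=
  RingQuot.mkAlgHom k (JordanRel k u v w) (FreeAlgebra.ι k 1)

set_option linter.unreachableTactic false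
set_option linter.unusedTactic false
set_option linter.unnecessarySeqFocus false
set_option maxHeartbeats 1000000

namespace JordanAux

variable (k : Type*) [Field k]

abbrev V9 (k : Type*) [Field k] := Fin 9 → k

def Pfun : V9 k → V9 k := fun x i =>
  if i.val = 1 then x 0 else if i.val = 3 then x 2 else if i.val = 5 then x 1
  else if i.val = 6 then x 3 else if i.val = 7 then x 4 else if i.val = 8 then x 6 else 0

def Qfun : V9 k → V9 k := fun x i =>
  if i.val = 2 then x 0 else if i.val = 3 then -(x 2) else if i.val = 4 then x 1
  else if i.val = 6 then x 4 else if i.val = 7 then x 5 else if i.val = 8 then x 7 else 0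

def Pl : Module.End k (V9 k) where
  toFun := Pfun k
  map_add' x y := by funext i; fin_cases i <;> simp +decide [Pfun] <;> ring
  map_smul' c x := by funext i; fin_cases i <;> simp +decide [Pfun] <;> ring

def Ql : Module.End k (V9 k) where
  toFun := Qfun k
  map_add' x y := by funext i; fin_cases i <;> simp +decide [Qfun] <;> ring
  map_smul' c x := by funext i; fin_cases i <;> simp +decide [Qfun] <;> ring

lemma mul2 {E : Type*} [Ring E] (f : E) : (2 : E) * f = f + f := two_mul f
lemma mul3 {E : Type*} [Ring E] (f : E) : (3 : E) * f = f + f + f := by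
  rw [show (3:E) = 2+1 by norm_num, add_mul, two_mul, one_mul]

set_option maxHeartbeats 1000000 in
lemma relA : Pl k * Ql k ^2 - 2*(Ql k * Pl k * Ql k) + Ql k^2 * Pl k = 0 := by
  apply LinearMap.ext; intro x; funext i
  fin_cases i <;>
    simp +decide [mul2, mul3, pow_succ, Module.End.mul_apply, Pl, Ql, Pfun, Qfun] <;> ring

set_option maxHeartbeats 1000000 in
lemma relB (u v w : k) : Pl k^3 * Ql k - 3*(Pl k^2* Ql k * Pl k) + 3*(Pl k * Ql k * Pl k^2)
    - Ql k * Pl k^3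
    + (1-u) • (Pl k * Ql k * Pl k * Ql k) + u • (Ql k * Pl k^2 * Ql k)
    + (u-3) • (Ql k * Pl k * Ql k * Pl k) + (2-u) • (Ql k^2 * Pl k^2)
    - v • (Ql k^2 * Pl k * Ql k) + v • (Ql k^3 * Pl k) + w • (Ql k^4) = 0 := by
  apply LinearMap.ext; intro x; funext i
  fin_cases i <;>
    simp +decide [mul2, mul3, pow_succ, Module.End.mul_apply, Pl, Ql, Pfun, Qfun] <;> ring

variable (u v w : k)

noncomputable def toEnd : JordanAlg k u v w →ₐ[k] Module.End k (V9 k) :=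
  RingQuot.liftAlgHom k ⟨FreeAlgebra.lift k ![Pl k, Ql k], by
    rintro x y (⟨⟩|⟨⟩) <;>
      simp only [map_sub, map_add, map_mul, map_pow, map_smul, map_ofNat, map_zero,
        FreeAlgebra.lift_ι_apply, Matrix.cons_val_zero, Matrix.cons_val_one, Matrix.head_cons]
    · exact relA k
    · exact relB k u v w⟩

lemma toEnd_X : toEnd k u v w (Jx₁ k u v w) = Pl k := by
  simp [toEnd, Jx₁, RingQuot.liftAlgHom_mkAlgHom_apply]

lemma toEnd_Y : toEnd k u v w (Jx₂ k u v w) = Ql k := by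
  simp [toEnd, Jx₂, RingQuot.liftAlgHom_mkAlgHom_apply]

def e0 : V9 k := fun j => if j.val = 0 then 1 else 0

lemma indep (a b : k) (h : a • Jx₁ k u v w + b • Jx₂ k u v w = 0) : a = 0 ∧ b = 0 := by
  have h' := congrArg (toEnd k u v w) h
  simp only [map_add, map_smul, map_zero, toEnd_X, toEnd_Y] at h'
  have h1 := congrFun (LinearMap.congr_fun h' (e0 k)) 1
  have h2 := congrFun (LinearMap.congr_fun h' (e0 k)) 2
  simp +decide [Pl, Ql, Pfun, Qfun, e0] at h1 h2
  exact ⟨h1, h2⟩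


section InA

variable {k : Type*} [Field k] (u v w : k)

lemma smul2 (z : JordanAlg k u v w) : (2 : JordanAlg k u v w) * z = (2:k) • z := by
  rw [Algebra.smul_def, map_ofNat]
lemma smul3 (z : JordanAlg k u v w) : (3 : JordanAlg k u v w) * z = (3:k) • z := by
  rw [Algebra.smul_def, map_ofNat]

lemma hF1 : Jx₁ k u v w * Jx₂ k u v w^2 - 2*(Jx₂ k u v w * Jx₁ k u v w * Jx₂ k u v w)
    + Jx₂ k u v w^2 * Jx₁ k u v w = 0 := by
  have h := RingQuot.mkAlgHom_rel k (JordanRel.rel1 (k := k) (u := u) (v := v) (w := w))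
  simpa [Jx₁, Jx₂, map_sub, map_add, map_mul, map_pow, map_ofNat] using h

lemma hF2 : Jx₁ k u v w^3 * Jx₂ k u v w
    - 3*(Jx₁ k u v w^2 * Jx₂ k u v w * Jx₁ k u v w)
    + 3*(Jx₁ k u v w * Jx₂ k u v w * Jx₁ k u v w^2)
    - Jx₂ k u v w * Jx₁ k u v w^3
    + (1-u) • (Jx₁ k u v w * Jx₂ k u v w * Jx₁ k u v w * Jx₂ k u v w)
    + u • (Jx₂ k u v w * Jx₁ k u v w^2 * Jx₂ k u v w)
    + (u-3) • (Jx₂ k u v w * Jx₁ k u v w * Jx₂ k u v w * Jx₁ k u v w)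
    + (2-u) • (Jx₂ k u v w^2 * Jx₁ k u v w^2)
    - v • (Jx₂ k u v w^2 * Jx₁ k u v w * Jx₂ k u v w)
    + v • (Jx₂ k u v w^3 * Jx₁ k u v w)
    + w • (Jx₂ k u v w^4) = 0 := by
  have h := RingQuot.mkAlgHom_rel k (JordanRel.rel2 (k := k) (u := u) (v := v) (w := w))
  simpa [Jx₁, Jx₂, map_sub, map_add, map_mul, map_pow, map_ofNat, map_smul] using h

end InA

section Conv

variable {k : Type*} [Field k] (u v w : k)

/-- the homomorphism x₁ ↦ a x₁ + b x₂, x₂ ↦ a x₂ -/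
noncomputable def phi (a b : k) : JordanAlg k u v w →ₐ[k] JordanAlg k u v w :=
  RingQuot.liftAlgHom k ⟨FreeAlgebra.lift k
    ![a • Jx₁ k u v w + b • Jx₂ k u v w, a • Jx₂ k u v w], by
    set X := Jx₁ k u v w
    set Y := Jx₂ k u v w
    rintro x y (⟨⟩|⟨⟩) <;>
      simp only [map_sub, map_add, map_mul, map_pow, map_smul, map_ofNat, map_zero,
        FreeAlgebra.lift_ι_apply, Matrix.cons_val_zero, Matrix.cons_val_one, Matrix.head_cons]
    · have key : (a•X+b•Y) * (a•Y)^2 - 2*((a•Y)*(a•X+b•Y)*(a•Y)) + (a•Y)^2*(a•X+b•Y)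
          = (a^3) • (X * Y^2 - 2*(Y*X*Y) + Y^2*X) := by
        simp only [smul2, smul3, pow_succ, pow_zero, one_mul, mul_add, add_mul,
          mul_sub, sub_mul, smul_mul_assoc, mul_smul_comm, smul_smul, smul_add, smul_sub, mul_assoc]
        match_scalars <;> ring
      rw [key, hF1 u v w, smul_zero]
    · have key : (a•X+b•Y)^3 * (a•Y) - 3*((a•X+b•Y)^2 * (a•Y) * (a•X+b•Y))
          + 3*((a•X+b•Y) * (a•Y) * (a•X+b•Y)^2) - (a•Y) * (a•X+b•Y)^3
          + (1-u) • ((a•X+b•Y) * (a•Y) * (a•X+b•Y) * (a•Y))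
          + u • ((a•Y) * (a•X+b•Y)^2 * (a•Y))
          + (u-3) • ((a•Y) * (a•X+b•Y) * (a•Y) * (a•X+b•Y))
          + (2-u) • ((a•Y)^2 * (a•X+b•Y)^2)
          - v • ((a•Y)^2 * (a•X+b•Y) * (a•Y))
          + v • ((a•Y)^3 * (a•X+b•Y))
          + w • ((a•Y)^4)
          = (a^4) • (X^3*Y - 3*(X^2*Y*X) + 3*(X*Y*X^2) - Y*X^3
              + (1-u) • (X*Y*X*Y) + u • (Y*X^2*Y) + (u-3) • (Y*X*Y*X)
              + (2-u) • (Y^2*X^2) - v • (Y^2*X*Y) + v • (Y^3*X) + w • (Y^4))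
            + (-(2*a^3*b)) • (X * (X * Y^2 - 2*(Y*X*Y) + Y^2*X))
            + (-(a^3*b) - a^2*b^2) • (Y * (X * Y^2 - 2*(Y*X*Y) + Y^2*X))
            + (2*a^3*b) • ((X * Y^2 - 2*(Y*X*Y) + Y^2*X) * X)
            + (a^3*b*(1-u) + a^2*b^2) • ((X * Y^2 - 2*(Y*X*Y) + Y^2*X) * Y) := by
        simp only [smul2, smul3, pow_succ, pow_zero, one_mul, mul_add, add_mul,
          mul_sub, sub_mul, smul_mul_assoc, mul_smul_comm, smul_smul, smul_add, smul_sub, mul_assoc]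
        match_scalars <;> ring
      rw [key, hF1 u v w, hF2 u v w]
      simp⟩

lemma phi_X (a b : k) : phi u v w a b (Jx₁ k u v w) = a • Jx₁ k u v w + b • Jx₂ k u v w := by
  simp [phi, Jx₁, RingQuot.liftAlgHom_mkAlgHom_apply]

lemma phi_Y (a b : k) : phi u v w a b (Jx₂ k u v w) = a • Jx₂ k u v w := by
  simp [phi, Jx₂, RingQuot.liftAlgHom_mkAlgHom_apply]

lemma hom_ext {F G : JordanAlg k u v w →ₐ[k] JordanAlg k u v w}
    (h1 : F (Jx₁ k u v w) = G (Jx₁ k u v w)) (h2 : F (Jx₂ k u v w) = G (Jx₂ k u v w)) :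
    F = G := by
  refine RingQuot.ringQuot_ext' k _ _ (FreeAlgebra.hom_ext (funext fun i => ?_))
  fin_cases i
  · simpa [Jx₁] using h1
  · simpa [Jx₂] using h2

noncomputable def sigmaEquiv (a b : k) (ha : a ≠ 0) :
    JordanAlg k u v w ≃ₐ[k] JordanAlg k u v w :=
  AlgEquiv.ofAlgHom (phi u v w a b) (phi u v w a⁻¹ (-(b/(a*a))))
    (hom_ext u v w
      (by simp only [AlgHom.comp_apply, AlgHom.id_apply, phi_X, phi_Y, map_add, map_smul]
          match_scalars <;> field_simp <;> ring)
      (by simp only [AlgHom.comp_apply, AlgHom.id_apply, phi_Y, map_smul]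
          match_scalars <;> field_simp <;> ring))
    (hom_ext u v w
      (by simp only [AlgHom.comp_apply, AlgHom.id_apply, phi_X, phi_Y, map_add, map_smul]
          match_scalars <;> field_simp <;> ring)
      (by simp only [AlgHom.comp_apply, AlgHom.id_apply, phi_Y, map_smul]
          match_scalars <;> field_simp <;> ring))

lemma sigmaEquiv_X (a b : k) (ha : a ≠ 0) :
    sigmaEquiv u v w a b ha (Jx₁ k u v w) = a • Jx₁ k u v w + b • Jx₂ k u v w :=
  phi_X u v w a b

lemma sigmaEquiv_Y (a b : k) (ha : a ≠ 0) :
    sigmaEquiv u v w a b ha (Jx₂ k u v w) = a • Jx₂ k u v w :=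
  phi_Y u v w a b

end Conv

end JordanAux

/-- every graded algebra automorphism σ of 𝒥 (i.e. one preserving
the degree-one part kx₁ ⊕ kx₂) has the form σ(x₁) = a x₁ + b x₂, σ(x₂) = a x₂
with a ≠ 0, and conversely every such assignment defines an automorphism; hence
Aut(𝒥) is isomorphic to the group of matrices (a b; 0 a), a ∈ k^×, b ∈ k. -/
theorem jordan_algebra_automorphisms (k : Type*) [Field k] [IsAlgClosed k]
    [CharZero k] (u v w : k) :
    (∀ σ : JordanAlg k u v w ≃ₐ[k] JordanAlg k u v w,
      σ (Jx₁ k u v w) ∈ Submodule.span k {Jx₁ k u v w, Jx₂ k u v w} →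
      σ (Jx₂ k u v w) ∈ Submodule.span k {Jx₁ k u v w, Jx₂ k u v w} →
      ∃ a b : k, a ≠ 0 ∧
        σ (Jx₁ k u v w) = a • Jx₁ k u v w + b • Jx₂ k u v w ∧
        σ (Jx₂ k u v w) = a • Jx₂ k u v w) ∧
    (∀ a b : k, a ≠ 0 →
      ∃ σ : JordanAlg k u v w ≃ₐ[k] JordanAlg k u v w,
        σ (Jx₁ k u v w) = a • Jx₁ k u v w + b • Jx₂ k u v w ∧
        σ (Jx₂ k u v w) = a • Jx₂ k u v w) := by
  set X := Jx₁ k u v w with hX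
  set Y := Jx₂ k u v w with hY
  constructor
  · intro σ h1 h2
    obtain ⟨α, β, hσX⟩ := Submodule.mem_span_pair.mp h1
    obtain ⟨γ, δ, hσY⟩ := Submodule.mem_span_pair.mp h2
    -- degree 3 relation mapped through σ
    have hG1 := congrArg σ (JordanAux.hF1 u v w)
    simp only [map_sub, map_add, map_mul, map_pow, map_ofNat, map_zero] at hG1
    rw [← hX, ← hY, ← hσX, ← hσY] at hG1
    have hM1 := congrArg (JordanAux.toEnd k u v w) hG1
    simp only [hX, hY, map_sub, map_add, map_mul, map_pow, map_smul, map_ofNat, map_zero,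
      JordanAux.toEnd_X, JordanAux.toEnd_Y] at hM1
    have h70 := congrFun (LinearMap.congr_fun hM1 (JordanAux.e0 k)) 7
    simp +decide [JordanAux.mul2, JordanAux.mul3, pow_succ, Module.End.mul_apply,
      JordanAux.Pl, JordanAux.Ql, JordanAux.Pfun, JordanAux.Qfun, JordanAux.e0] at h70
    have e1 : γ * (α * δ - β * γ) = 0 := by linear_combination h70
    have hγ : γ = 0 := by
      by_contra hg
      have hαδ : α * δ - β * γ = 0 := (mul_eq_zero.mp e1).resolve_left hg
      have hz : σ (γ • X + (-α) • Y) = σ 0 := by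
        rw [map_add, map_smul, map_smul, map_zero, ← hσX, ← hσY]
        match_scalars
        · ring
        · linear_combination -hαδ
      exact hg (JordanAux.indep k u v w γ (-α) (σ.injective hz)).1
    rw [hγ, zero_smul, zero_add] at hσY
    have hδ : δ ≠ 0 := by
      intro h0
      rw [h0, zero_smul] at hσY
      have hY0 : Y = 0 := σ.injective (by rw [← hσY, map_zero])
      have : (0:k) • X + (1:k) • Y = 0 := by simp [hY0]
      exact one_ne_zero (JordanAux.indep k u v w 0 1 this).2
    have hα : α ≠ 0 := by
      intro h0
      rw [h0, zero_smul, zero_add] at hσX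
      have hz : σ (δ • X + (-β) • Y) = σ 0 := by
        rw [map_add, map_smul, map_smul, map_zero, ← hσX, ← hσY]
        module
      exact hδ (JordanAux.indep k u v w δ (-β) (σ.injective hz)).1
    -- degree 4 relation mapped through σ
    have hG2 := congrArg σ (JordanAux.hF2 u v w)
    simp only [map_sub, map_add, map_mul, map_pow, map_smul, map_ofNat, map_zero] at hG2
    rw [← hX, ← hY, ← hσX, ← hσY] at hG2
    have hM2 := congrArg (JordanAux.toEnd k u v w) hG2
    simp only [hX, hY, map_sub, map_add, map_mul, map_pow, map_smul, map_ofNat, map_zero,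
      JordanAux.toEnd_X, JordanAux.toEnd_Y] at hM2
    have h80 := congrFun (LinearMap.congr_fun hM2 (JordanAux.e0 k)) 8
    simp +decide [JordanAux.mul2, JordanAux.mul3, pow_succ, Module.End.mul_apply,
      JordanAux.Pl, JordanAux.Ql, JordanAux.Pfun, JordanAux.Qfun, JordanAux.e0] at h80
    have e2 : α * α * δ * (α - δ) = 0 := by linear_combination h80
    have hδα : δ = α := by
      rcases mul_eq_zero.mp e2 with h|h
      · rcases mul_eq_zero.mp h with h'|h'
        · rcases mul_eq_zero.mp h' with h''|h''
          · exact absurd h'' hα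
          · exact absurd h'' hα
        · exact absurd h' hδ
      · have := sub_eq_zero.mp h
        exact this.symm ▸ rfl
    exact ⟨α, β, hα, hσX.symm, by rw [← hσY, hδα]⟩
  · intro a b ha
    exact ⟨JordanAux.sigmaEquiv u v w a b ha, JordanAux.sigmaEquiv_X u v w a b ha,
      JordanAux.sigmaEquiv_Y u v w a b ha⟩
end

section
/- Let u, v, w ∈ k. The solutions (in ℙ¹ × ℙ¹ × ℙ¹ × ℙ¹, coordinates α_i = (p_i : q_i)) of the system p₃q₂q₁ − 2q₃p₂q₁ + q₃q₂p₁ = 0, p₄q₃q₂ − 2q₄p₃q₂ + q₄q₃p₂ = 0, together with p₄p₃p₂q₁ − 3p₄p₃q₂p₁ + 3p₄q₃p₂p₁ + (1−u)p₄q₃p₂q₁ − q₄p₃p₂p₁ + u q₄p₃p₂q₁ + (u−3)q₄p₃q₂p₁ + (2−u)q₄q₃p₂p₁ − v q₄q₃p₂q₁ + v q₄q₃q₂p₁ + w q₄q₃q₂q₁ = 0, are exactly: (i) q₁=q₂=q₃=q₄=0; (ii) q₂=q₃=0, q₁=q₄=1, p₂=p₃=1 (after scaling), p₁ arbitrary,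 p₄ = p₁ − u; (iii) q₁=q₂=q₃=q₄=1, p_i = p₁ + (i−1)d for i = 2,3,4, where d ∈ k satisfies 6d³ + (3−u)d² − vd + w = 0, p₁ arbitrary. -/
/-- classification of the solutions (in ℙ¹ × ℙ¹ × ℙ¹ × ℙ¹,
homogeneous coordinates α_i = (p_i : q_i)) of the point-module equations (EP)
of the Jordan-type algebra 𝒥. -/
theorem point_module_equation_solutions (k : Type*) [Field k] [IsAlgClosed k]
    [CharZero k] (u v w : k) (p₁ p₂ p₃ p₄ q₁ q₂ q₃ q₄ : k)
    (h₁ : ¬(p₁ = 0 ∧ q₁ = 0)) (h₂ : ¬(p₂ = 0 ∧ q₂ = 0))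
    (h₃ : ¬(p₃ = 0 ∧ q₃ = 0)) (h₄ : ¬(p₄ = 0 ∧ q₄ = 0)) :
    (p₃ * q₂ * q₁ - 2 * (q₃ * p₂ * q₁) + q₃ * q₂ * p₁ = 0 ∧
     p₄ * q₃ * q₂ - 2 * (q₄ * p₃ * q₂) + q₄ * q₃ * p₂ = 0 ∧
     p₄ * p₃ * p₂ * q₁ - 3 * (p₄ * p₃ * q₂ * p₁) + 3 * (p₄ * q₃ * p₂ * p₁)
       + (1 - u) * (p₄ * q₃ * p₂ * q₁) - q₄ * p₃ * p₂ * p₁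
       + u * (q₄ * p₃ * p₂ * q₁) + (u - 3) * (q₄ * p₃ * q₂ * p₁)
       + (2 - u) * (q₄ * q₃ * p₂ * p₁) - v * (q₄ * q₃ * p₂ * q₁)
       + v * (q₄ * q₃ * q₂ * p₁) + w * (q₄ * q₃ * q₂ * q₁) = 0)
    ↔
    ((q₁ = 0 ∧ q₂ = 0 ∧ q₃ = 0 ∧ q₄ = 0) ∨
     (q₂ = 0 ∧ q₃ = 0 ∧ q₁ ≠ 0 ∧ q₄ ≠ 0 ∧ p₂ ≠ 0 ∧ p₃ ≠ 0 ∧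
       p₄ * q₁ = p₁ * q₄ - u * (q₁ * q₄)) ∨
     (q₁ ≠ 0 ∧ q₂ ≠ 0 ∧ q₃ ≠ 0 ∧ q₄ ≠ 0 ∧
       ∃ d : k, 6 * d ^ 3 + (3 - u) * d ^ 2 - v * d + w = 0 ∧
         p₂ * q₁ = p₁ * q₂ + d * (q₁ * q₂) ∧
         p₃ * q₁ = p₁ * q₃ + 2 * d * (q₁ * q₃) ∧
         p₄ * q₁ = p₁ * q₄ + 3 * d * (q₁ * q₄))) := by
  constructor
  · rintro ⟨e1, e2, e3⟩
    by_cases hq2 : q₂ = 0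
    · have hp2 : p₂ ≠ 0 := fun h => h₂ ⟨h, hq2⟩
      subst hq2
      by_cases hq3 : q₃ = 0
      · have hp3 : p₃ ≠ 0 := fun h => h₃ ⟨h, hq3⟩
        subst hq3
        have key : p₄ * q₁ - p₁ * q₄ + u * (q₁ * q₄) = 0 := by
          have h0 : p₂ * (p₃ * (p₄ * q₁ - p₁ * q₄ + u * (q₁ * q₄))) = 0 := by
            linear_combination e3
          rcases mul_eq_zero.mp h0 with h | h
          · exact absurd h hp2
          rcases mul_eq_zero.mp h with h | h
          · exact absurd h hp3
          exact h
        by_cases hq1 : q₁ = 0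
        · have hp1 : p₁ ≠ 0 := fun h => h₁ ⟨h, hq1⟩
          subst hq1
          have hq4 : q₄ = 0 := by
            have : p₁ * q₄ = 0 := by linear_combination -key
            exact (mul_eq_zero.mp this).resolve_left hp1
          exact Or.inl ⟨rfl, rfl, rfl, hq4⟩
        · have hq4 : q₄ ≠ 0 := by
            intro hq4
            subst hq4
            have hp4 : p₄ ≠ 0 := fun h => h₄ ⟨h, rfl⟩
            have : p₄ * q₁ = 0 := by linear_combination key
            rcases mul_eq_zero.mp this with h | h
            exacts [hp4 h, hq1 h]
          exact Or.inr (Or.inl ⟨rfl, rfl, hq1, hq4, hp2, hp3,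
            by linear_combination key⟩)
      · -- q₂ = 0, q₃ ≠ 0 : contradiction
        have hq1 : q₁ = 0 := by
          have h0 : q₃ * (p₂ * q₁) = 0 := by linear_combination -(1/2 : k) * e1
          rcases mul_eq_zero.mp h0 with h | h
          · exact absurd h hq3
          exact (mul_eq_zero.mp h).resolve_left hp2
        have hp1 : p₁ ≠ 0 := fun h => h₁ ⟨h, hq1⟩
        have hq4 : q₄ = 0 := by
          have h0 : q₄ * (q₃ * p₂) = 0 := by linear_combination e2
          rcases mul_eq_zero.mp h0 with h | h
          · exact h
          · exact absurd ((mul_eq_zero.mp h).resolve_left hq3) hp2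
        have hp4 : p₄ ≠ 0 := fun h => h₄ ⟨h, hq4⟩
        subst hq1; subst hq4
        have h0 : p₄ * (q₃ * (p₂ * p₁)) = 0 := by linear_combination (1/3 : k) * e3
        rcases mul_eq_zero.mp h0 with h | h
        · exact absurd h hp4
        rcases mul_eq_zero.mp h with h | h
        · exact absurd h hq3
        rcases mul_eq_zero.mp h with h | h
        exacts [absurd h hp2, absurd h hp1]
    · by_cases hq3 : q₃ = 0
      · -- q₂ ≠ 0, q₃ = 0 : contradiction
        have hp3 : p₃ ≠ 0 := fun h => h₃ ⟨h, hq3⟩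
        subst hq3
        have hq1 : q₁ = 0 := by
          have h0 : p₃ * (q₂ * q₁) = 0 := by linear_combination e1
          rcases mul_eq_zero.mp h0 with h | h
          · exact absurd h hp3
          exact (mul_eq_zero.mp h).resolve_left hq2
        have hp1 : p₁ ≠ 0 := fun h => h₁ ⟨h, hq1⟩
        have hq4 : q₄ = 0 := by
          have h0 : q₄ * (p₃ * q₂) = 0 := by linear_combination -(1/2 : k) * e2
          rcases mul_eq_zero.mp h0 with h | h
          · exact h
          · exact absurd ((mul_eq_zero.mp h).resolve_left hp3) hq2
        have hp4 : p₄ ≠ 0 := fun h => h₄ ⟨h, hq4⟩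
        subst hq1; subst hq4
        have h0 : p₄ * (p₃ * (q₂ * p₁)) = 0 := by linear_combination -(1/3 : k) * e3
        rcases mul_eq_zero.mp h0 with h | h
        · exact absurd h hp4
        rcases mul_eq_zero.mp h with h | h
        · exact absurd h hp3
        rcases mul_eq_zero.mp h with h | h
        exacts [absurd h hq2, absurd h hp1]
      · by_cases hq1 : q₁ = 0
        · -- q₂ ≠ 0, q₃ ≠ 0, q₁ = 0 : contradiction
          have hp1 : p₁ ≠ 0 := fun h => h₁ ⟨h, hq1⟩
          subst hq1
          have h0 : q₃ * (q₂ * p₁) = 0 := by linear_combination e1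
          rcases mul_eq_zero.mp h0 with h | h
          · exact absurd h hq3
          rcases mul_eq_zero.mp h with h | h
          exacts [absurd h hq2, absurd h hp1]
        · by_cases hq4 : q₄ = 0
          · -- contradiction from e2
            have hp4 : p₄ ≠ 0 := fun h => h₄ ⟨h, hq4⟩
            subst hq4
            have h0 : p₄ * (q₃ * q₂) = 0 := by linear_combination e2
            rcases mul_eq_zero.mp h0 with h | h
            · exact absurd h hp4
            rcases mul_eq_zero.mp h with h | h
            exacts [absurd h hq3, absurd h hq2]
          · -- generic case
            refine Or.inr (Or.inr ⟨hq1, hq2, hq3, hq4, ?_⟩)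
            set d : k := (p₂ * q₁ - p₁ * q₂) / (q₁ * q₂) with hd_def
            have hqq : q₁ * q₂ ≠ 0 := mul_ne_zero hq1 hq2
            have r2 : p₂ * q₁ = p₁ * q₂ + d * (q₁ * q₂) := by
              rw [hd_def, div_mul_cancel₀ _ hqq]; ring
            have r3 : p₃ * q₁ = p₁ * q₃ + 2 * d * (q₁ * q₃) := by
              have h0 : q₂ * (p₃ * q₁ - (p₁ * q₃ + 2 * d * (q₁ * q₃))) = 0 := by
                linear_combination e1 + 2 * q₃ * r2
              have h1 := (mul_eq_zero.mp h0).resolve_left hq2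
              linear_combination h1
            have r4 : p₄ * q₁ = p₁ * q₄ + 3 * d * (q₁ * q₄) := by
              have h0 : q₃ * (q₂ * (p₄ * q₁ - (p₁ * q₄ + 3 * d * (q₁ * q₄)))) = 0 := by
                linear_combination q₁ * e2 + 2 * q₄ * q₂ * r3 - q₄ * q₃ * r2
              have h1 := ((mul_eq_zero.mp h0).resolve_left hq3)
              have h2 := (mul_eq_zero.mp h1).resolve_left hq2
              linear_combination h2
            refine ⟨d, ?_, r2, r3, r4⟩
            have key : q₄ * (q₃ * (q₂ * (q₁ ^ 4 *
                (6 * d ^ 3 + (3 - u) * d ^ 2 - v * d + w)))) = 0 := by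
              linear_combination q₁ ^ 3 * e3
                - (q₁ ^ 2 * (p₃ * p₂ * q₁ - 3 * (p₃ * q₂ * p₁) + 3 * (q₃ * p₂ * p₁)
                    + (1 - u) * (q₃ * p₂ * q₁))) * r4
                - (q₁ * q₄ * ((3 * d + u) * (p₂ * q₁ ^ 2)
                    + (u - 3 - 9 * d) * (q₂ * p₁ * q₁) - 3 * (q₂ * p₁ ^ 2))) * r3
                - (q₄ * q₃ * (3 * (p₁ ^ 2 * q₁) + (12 * d + 3 - u) * (p₁ * q₁ ^ 2)
                    + (6 * d ^ 2 + (3 - u) * d - v) * q₁ ^ 3)) * r2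
            have h1 := (mul_eq_zero.mp key).resolve_left hq4
            have h2 := (mul_eq_zero.mp h1).resolve_left hq3
            have h3 := (mul_eq_zero.mp h2).resolve_left hq2
            exact (mul_eq_zero.mp h3).resolve_left (pow_ne_zero 4 hq1)
  · rintro (⟨hq1, hq2, hq3, hq4⟩ | ⟨hq2, hq3, hq1, hq4, hp2, hp3, key⟩ |
      ⟨hq1, hq2, hq3, hq4, d, hd, r2, r3, r4⟩)
    · subst hq1; subst hq2; subst hq3; subst hq4
      refine ⟨by ring, by ring, by ring⟩
    · subst hq2; subst hq3
      exact ⟨by ring, by ring, by linear_combination p₃ * p₂ * key⟩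
    · refine ⟨?_, ?_, ?_⟩
      · linear_combination q₂ * r3 - 2 * q₃ * r2
      · have h0 : q₁ * (p₄ * q₃ * q₂ - 2 * (q₄ * p₃ * q₂) + q₄ * q₃ * p₂) = 0 := by
          linear_combination q₃ * q₂ * r4 - 2 * q₄ * q₂ * r3 + q₄ * q₃ * r2
        have h1 := (mul_eq_zero.mp h0).resolve_left hq1
        linear_combination h1
      · have h0 : q₁ ^ 3 * (p₄ * p₃ * p₂ * q₁ - 3 * (p₄ * p₃ * q₂ * p₁)
            + 3 * (p₄ * q₃ * p₂ * p₁) + (1 - u) * (p₄ * q₃ * p₂ * q₁)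
            - q₄ * p₃ * p₂ * p₁ + u * (q₄ * p₃ * p₂ * q₁)
            + (u - 3) * (q₄ * p₃ * q₂ * p₁) + (2 - u) * (q₄ * q₃ * p₂ * p₁)
            - v * (q₄ * q₃ * p₂ * q₁) + v * (q₄ * q₃ * q₂ * p₁)
            + w * (q₄ * q₃ * q₂ * q₁)) = 0 := by
          linear_combination
            (q₁ ^ 2 * (p₃ * p₂ * q₁ - 3 * (p₃ * q₂ * p₁) + 3 * (q₃ * p₂ * p₁)
                + (1 - u) * (q₃ * p₂ * q₁))) * r4
            + (q₁ * q₄ * ((3 * d + u) * (p₂ * q₁ ^ 2)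
                + (u - 3 - 9 * d) * (q₂ * p₁ * q₁) - 3 * (q₂ * p₁ ^ 2))) * r3
            + (q₄ * q₃ * (3 * (p₁ ^ 2 * q₁) + (12 * d + 3 - u) * (p₁ * q₁ ^ 2)
                + (6 * d ^ 2 + (3 - u) * d - v) * q₁ ^ 3)) * r2
            + (q₄ * q₃ * q₂ * q₁ ^ 4) * hd
        have h1 := (mul_eq_zero.mp h0).resolve_left (pow_ne_zero 3 hq1)
        linear_combination h1
end

section
/- Let d ∈ k. The sequence p_i = p₁ + (i−1)d, q_i = 1 (i ≥ 1) satisfies, for every i ≥ 0, both recursive relations p_{i+3}q_{i+2}q_{i+1} − 2q_{i+3}p_{i+2}q_{i+1} + q_{i+3}q_{i+2}p_{i+1} = 0 and the degree-4 relation p_{i+4}p_{i+3}p_{i+2}q_{i+1} − 3p_{i+4}p_{i+3}q_{i+2}p_{i+1} + 3p_{i+4}q_{i+3}p_{i+2}p_{i+1} + (1−u)p_{i+4}q_{i+3}p_{i+2}q_{i+1} − q_{i+4}p_{i+3}p_{i+2}p_{i+1} + u q_{i+4}p_{i+3}p_{i+2}q_{i+1} + (u−3)q_{i+4}p_{i+3}q_{i+2}p_{i+1}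 + (2−u)q_{i+4}q_{i+3}p_{i+2}p_{i+1} − v q_{i+4}q_{i+3}p_{i+2}q_{i+1} + v q_{i+4}q_{i+3}q_{i+2}p_{i+1} + w q_{i+4}q_{i+3}q_{i+2}q_{i+1} = 0, if and only if 6d³ + (3−u)d² − vd + w = 0. -/
/-- Key algebraic identity: the degree-4 expression for the arithmetic
progression starting at `t` with common difference `d` equals the cubic in `d`. -/
lemma ap_deg4_identity {k : Type*} [Field k] (u v w t d : k) :
    (t + 3*d) * (t + 2*d) * (t + d) - 3 * ((t + 3*d) * (t + 2*d) * t)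
      + 3 * ((t + 3*d) * (t + d) * t)
      + (1 - u) * ((t + 3*d) * (t + d))
      - (t + 2*d) * (t + d) * t
      + u * ((t + 2*d) * (t + d))
      + (u - 3) * ((t + 2*d) * t)
      + (2 - u) * ((t + d) * t)
      - v * (t + d)
      + v * t
      + w = 6 * d ^ 3 + (3 - u) * d ^ 2 - v * d + w := by
  ring

/-- the arithmetic-progression sequence p_i = p₁ + (i−1)d, q_i = 1
satisfies the two recursive point-module relations of 𝒥 for every i ≥ 0 if and
only if 6d³ + (3−u)d² − vd + w = 0. -/
theorem arithmetic_progression_point_module (k : Type*) [Field k] [CharZero k]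
    (u v w p₁ d : k) :
    ∀ p q : ℕ → k,
      (∀ n : ℕ, p n = p₁ + ((n : k) - 1) * d) → (∀ n : ℕ, q n = 1) →
      ((∀ i : ℕ,
          p (i+3) * q (i+2) * q (i+1) - 2 * (q (i+3) * p (i+2) * q (i+1))
            + q (i+3) * q (i+2) * p (i+1) = 0 ∧
          p (i+4) * p (i+3) * p (i+2) * q (i+1) - 3 * (p (i+4) * p (i+3) * q (i+2) * p (i+1))
            + 3 * (p (i+4) * q (i+3) * p (i+2) * p (i+1))
            + (1 - u) * (p (i+4) * q (i+3) * p (i+2) * q (i+1))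
            - q (i+4) * p (i+3) * p (i+2) * p (i+1)
            + u * (q (i+4) * p (i+3) * p (i+2) * q (i+1))
            + (u - 3) * (q (i+4) * p (i+3) * q (i+2) * p (i+1))
            + (2 - u) * (q (i+4) * q (i+3) * p (i+2) * p (i+1))
            - v * (q (i+4) * q (i+3) * p (i+2) * q (i+1))
            + v * (q (i+4) * q (i+3) * q (i+2) * p (i+1))
            + w * (q (i+4) * q (i+3) * q (i+2) * q (i+1)) = 0)
        ↔ 6 * d ^ 3 + (3 - u) * d ^ 2 - v * d + w = 0) := by
  intro p q hp hq
  constructor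
  · intro h
    have h2 := (h 0).2
    simp only [hp, hq] at h2
    push_cast at h2
    linear_combination h2
  · intro hc i
    simp only [hp, hq]
    push_cast
    constructor
    · ring
    · linear_combination hc
end
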